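/- arXiv:2104.01065 — 5 statements merged into one kernel-verified Lean document; each statement's English description precedes it below -/
import Mathlib

section
/- Let M₀, F₁, F₂, G₁, G₂ be multisets over a type α with F₁ ≤ M₀ and F₂ ≤ M₀. Let O₁ = F₁ ∩ ((F₁ + F₂) - M₀) and O₂ = F₂ ∩ ((F₁ + F₂) - M₀), and suppose O₁ ≤ G₁ and O₂ ≤ G₂. Then F₂ ≤ (M₀ - F₁) + G₁, F₁ ≤ (M₀ - F₂) + G₂, and (((M₀ - F₁) + G₁) - F₂) + G₂ = (((M₀ - F₂) + G₂) - F₁) + G₁. -/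
/-- Commutation diamond for two non-overlapping multiset rewrite rules. -/
theorem stmt_7 {α : Type*} [DecidableEq α] (M₀ F₁ F₂ G₁ G₂ : Multiset α)
    (h1 : F₁ ≤ M₀) (h2 : F₂ ≤ M₀)
    (hO1 : F₁ ∩ ((F₁ + F₂) - M₀) ≤ G₁)
    (hO2 : F₂ ∩ ((F₁ + F₂) - M₀) ≤ G₂) :
    F₂ ≤ (M₀ - F₁) + G₁ ∧ F₁ ≤ (M₀ - F₂) + G₂ ∧
      (((M₀ - F₁) + G₁) - F₂) + G₂ = (((M₀ - F₂) + G₂) - F₁) + G₁ := by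
  have key : ∀ P : Prop, (∀ a : α,
      Multiset.count a F₁ ≤ Multiset.count a M₀ →
      Multiset.count a F₂ ≤ Multiset.count a M₀ →
      min (Multiset.count a F₁) (Multiset.count a F₁ + Multiset.count a F₂ - Multiset.count a M₀) ≤ Multiset.count a G₁ →
      min (Multiset.count a F₂) (Multiset.count a F₁ + Multiset.count a F₂ - Multiset.count a M₀) ≤ Multiset.count a G₂ → P) → True := fun _ _ => trivial
  refine ⟨?_, ?_, ?_⟩
  · rw [Multiset.le_iff_count]
    intro a
    have c1 := Multiset.count_le_of_le a h1
    have c2 := Multiset.count_le_of_le a h2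
    have c3 := Multiset.count_le_of_le a hO1
    simp only [Multiset.count_sub, Multiset.count_inter, Multiset.count_add] at *
    omega
  · rw [Multiset.le_iff_count]
    intro a
    have c1 := Multiset.count_le_of_le a h1
    have c2 := Multiset.count_le_of_le a h2
    have c4 := Multiset.count_le_of_le a hO2
    simp only [Multiset.count_sub, Multiset.count_inter, Multiset.count_add] at *
    omega
  · ext a
    have c1 := Multiset.count_le_of_le a h1
    have c2 := Multiset.count_le_of_le a h2
    have c3 := Multiset.count_le_of_le a hO1
    have c4 := Multiset.count_le_of_le a hO2
    simp only [Multiset.count_sub, Multiset.count_inter, Multiset.count_add] at *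
    omega
end

section
/- Let n ≥ 1 and let F : Fin n → Multiset α, G₁ : Multiset α, and M₀ : Multiset α be such that F i ≤ M₀ for every i, and (F 0) ∩ ((∑ i, F i) - M₀) ≤ G₁. Then for every index i ≠ 0, F i ≤ (M₀ - F 0) + G₁. -/
/-- After applying a non-overlapping rule with active multiset F 0 and result G₁,
the remaining rules stay applicable. -/
theorem stmt_8 {α : Type*} [DecidableEq α] {n : ℕ} (hn : 0 < n)
    (F : Fin n → Multiset α) (G₁ M₀ : Multiset α)
    (hF : ∀ i, F i ≤ M₀)
    (hO : F ⟨0, hn⟩ ∩ ((∑ i, F i) - M₀) ≤ G₁) :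
    ∀ i : Fin n, i ≠ ⟨0, hn⟩ → F i ≤ (M₀ - F ⟨0, hn⟩) + G₁ := by
  intro i hi
  rw [Multiset.le_iff_count]
  intro a
  have h1 := Multiset.count_le_of_le a (hF i)
  have h2 := Multiset.count_le_of_le a (hF ⟨0, hn⟩)
  have hO' := Multiset.count_le_of_le a hO
  rw [Multiset.count_inter, Multiset.count_sub] at hO'
  have hsum : (F ⟨0, hn⟩).count a + (F i).count a ≤ (∑ j, F j).count a := by
    rw [Multiset.count_sum']
    have hsub : ({⟨0, hn⟩, i} : Finset (Fin n)) ⊆ Finset.univ := Finset.subset_univ _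
    calc (F ⟨0, hn⟩).count a + (F i).count a
        = ∑ j ∈ ({⟨0, hn⟩, i} : Finset (Fin n)), (F j).count a := by
          rw [Finset.sum_pair (Ne.symm hi)]
      _ ≤ ∑ j, (F j).count a := Finset.sum_le_sum_of_subset_of_nonneg hsub
          (fun _ _ _ => Nat.zero_le _)
  rw [Multiset.count_add, Multiset.count_sub]
  omega
end

section
/- Let n ≥ 1 and let F : Fin n → Multiset α, G₁ : Multiset α, M₀ : Multiset α be such that F i ≤ M₀ for every i and (F 0) ∩ ((∑ i, F i) - M₀) ≤ G₁. Then (∑ i ≠ 0, F i) - ((M₀ - F 0) + G₁) ≤ (∑ i, F i) - M₀, i.e. the overlap of the remaining active multisets in the rewritten multiset is contained in the original overlap. -/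
/-- The overlap of the remaining active multisets in the rewritten multiset is
contained in the original overlap. -/
theorem stmt_9 {α : Type*} [DecidableEq α] {n : ℕ} (hn : 0 < n)
    (F : Fin n → Multiset α) (G₁ M₀ : Multiset α)
    (hF : ∀ i, F i ≤ M₀)
    (hO : F ⟨0, hn⟩ ∩ ((∑ i, F i) - M₀) ≤ G₁) :
    (∑ i ∈ Finset.univ.filter (fun i : Fin n => i ≠ ⟨0, hn⟩), F i)
        - ((M₀ - F ⟨0, hn⟩) + G₁)
      ≤ (∑ i, F i) - M₀ := by
  rw [Multiset.le_iff_count]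
  intro a
  have hO' := Multiset.count_le_of_le a hO
  have hF' := fun i => Multiset.count_le_of_le a (hF i)
  have hfe : Finset.univ.filter (fun i : Fin n => i ≠ ⟨0, hn⟩)
      = Finset.univ.erase ⟨0, hn⟩ := by
    ext i; simp [Finset.mem_erase, and_comm]
  have hsplit : (∑ i, Multiset.count a (F i))
      = Multiset.count a (F ⟨0, hn⟩) + ∑ i ∈ Finset.univ.erase ⟨0, hn⟩, Multiset.count a (F i) :=
    (Finset.add_sum_erase _ _ (Finset.mem_univ _)).symm
  simp only [Multiset.count_sub, Multiset.count_add, Multiset.count_inter,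
    Multiset.count_sum', hfe] at *
  have := hF' ⟨0, hn⟩
  omega
end

section
/- For all communication trees u and w, u ⊑ᵣ w if and only if for every n : ℕ, ⌊u⌋ₙ ⊑ᵣ w. In other words, simulation is determined by all finite truncations of the left-hand side. -/
/-! Coinductive communication trees, realized as the M-type of a polynomial
functor, together with the coinductively defined simulation relation. -/

/-- Shapes of nodes of communication trees. -/
inductive CommShape (V L : Type) : Type where
  | bot : CommShape V L
  | close : CommShape V L
  | label (k : L) : CommShape V L
  | pair : CommShape V L
  | val (f : V) : CommShape V L

/-- Arities: `bot` and `close` have no children, `label` and `val` have one,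
`pair` has two. -/
def commArity (V L : Type) : CommShape V L → Type
  | .bot => Empty
  | .close => Empty
  | .label _ => Unit
  | .pair => Bool
  | .val _ => Unit

/-- The polynomial functor of communication trees. -/
def CommP (V L : Type) : PFunctor := ⟨CommShape V L, commArity V L⟩

/-- The coinductive type of (possibly infinite) communication trees. -/
def Comm (V L : Type) : Type := (CommP V L).M

namespace Comm

variable {V L : Type}

/-- The empty communication. -/
def bot : Comm V L := PFunctor.M.mk ⟨CommShape.bot, Empty.elim⟩

/-- The close message. -/
def close : Comm V L := PFunctor.M.mk ⟨CommShape.close, Empty.elim⟩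

/-- A label followed by a continuation. -/
def label (k : L) (v : Comm V L) : Comm V L :=
  PFunctor.M.mk ⟨CommShape.label k, fun _ => v⟩

/-- A pair of communications (channel transmission). -/
def pair (v v' : Comm V L) : Comm V L :=
  PFunctor.M.mk ⟨CommShape.pair, fun b : Bool => if b then v else v'⟩

/-- A functional value followed by a continuation. -/
def val (f : V) (v : Comm V L) : Comm V L :=
  PFunctor.M.mk ⟨CommShape.val f, fun _ => v⟩

/-- One unfolding of the simulation relation: the clauses defining simulation. -/
def SimStep (R : V → V → Prop) (S : Comm V L → Comm V L → Prop)
    (u w : Comm V L) : Prop :=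
  u = Comm.bot ∨
  (u = Comm.close ∧ w = Comm.close) ∨
  (∃ k v v', u = Comm.label k v ∧ w = Comm.label k v' ∧ S v v') ∨
  (∃ a b a' b', u = Comm.pair a b ∧ w = Comm.pair a' b' ∧ S a a' ∧ S b b') ∨
  (∃ f g v v', u = Comm.val f v ∧ w = Comm.val g v' ∧ R f g ∧ S v v')

/-- Simulation modulo `R`: the largest relation closed under the clauses of
`SimStep`, i.e. the union of all post-fixed points. -/
def Sim (R : V → V → Prop) (u w : Comm V L) : Prop :=
  ∃ S : Comm V L → Comm V L → Prop, (∀ a b, S a b → SimStep R S a b) ∧ S u w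

/-- The height-`n` truncation of a communication tree. -/
def trunc : ℕ → Comm V L → Comm V L
  | 0, _ => Comm.bot
  | n + 1, w =>
    match PFunctor.M.dest w with
    | ⟨CommShape.bot, _⟩ => Comm.bot
    | ⟨CommShape.close, _⟩ => Comm.close
    | ⟨CommShape.label k, f⟩ => Comm.label k (trunc n (f ()))
    | ⟨CommShape.pair, f⟩ => Comm.pair (trunc n (f true)) (trunc n (f false))
    | ⟨CommShape.val g, f⟩ => Comm.val g (trunc n (f ()))

end Comm

/-!
Everything rests on one commutation: unfolding the simulation clauses once at `trunc (n + 1) u`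
is the same as unfolding them at `u` against the relation precomposed with `trunc n`. Induction
on `n` then gives the forward direction. For the converse, `fun a b => ∀ n, Sim R (trunc n a) b`
is a post-fixed point of the clauses: the clauses obtained at the various depths all decompose the
right-hand side in the same way, because the constructors are injective, so they merge into a
single step.
-/

namespace Comm

variable {V L : Type} {R : V → V → Prop} {S : Comm V L → Comm V L → Prop}

theorem cases {motive : Comm V L → Prop} (hbot : motive bot) (hclose : motive close)
    (hlabel : ∀ k v, motive (label k v)) (hpair : ∀ a b, motive (pair a b))
    (hval : ∀ f v, motive (val f v)) (u : Comm V L) : motive u := by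
  rw [← PFunctor.M.mk_dest u]
  obtain ⟨s, c⟩ := PFunctor.M.dest u
  cases s with
  | bot => obtain rfl : c = Empty.elim := funext fun x => (x : Empty).elim; exact hbot
  | close => obtain rfl : c = Empty.elim := funext fun x => (x : Empty).elim; exact hclose
  | label k => exact hlabel k (c ())
  | pair =>
    rw [show c = fun b : Bool => if b then c true else c false from
      funext fun b => by cases b <;> rfl]
    exact hpair (c true) (c false)
  | val f => exact hval f (c ())

@[simp]
theorem label_inj {k k' : L} {v v' : Comm V L} : label k v = label k' v' ↔ k = k' ∧ v = v' := by
  refine ⟨fun h => ?_, by rintro ⟨rfl, rfl⟩; rfl⟩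
  injection PFunctor.M.mk_inj h with hk hc
  cases hk
  exact ⟨rfl, congrFun hc ()⟩

@[simp]
theorem pair_inj {a b a' b' : Comm V L} : pair a b = pair a' b' ↔ a = a' ∧ b = b' := by
  refine ⟨fun h => ?_, by rintro ⟨rfl, rfl⟩; rfl⟩
  injection PFunctor.M.mk_inj h with _ hc
  exact ⟨congrFun hc true, congrFun hc false⟩

@[simp]
theorem val_inj {f f' : V} {v v' : Comm V L} : val f v = val f' v' ↔ f = f' ∧ v = v' := by
  refine ⟨fun h => ?_, by rintro ⟨rfl, rfl⟩; rfl⟩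
  injection PFunctor.M.mk_inj h with hf hc
  cases hf
  exact ⟨rfl, congrFun hc ()⟩

@[simp] theorem trunc_succ_bot (n : ℕ) : trunc (n + 1) (bot : Comm V L) = bot := rfl
@[simp] theorem trunc_succ_close (n : ℕ) : trunc (n + 1) (close : Comm V L) = close := rfl
@[simp] theorem trunc_succ_label (n : ℕ) (k : L) (v : Comm V L) :
    trunc (n + 1) (label k v) = label k (trunc n v) := rfl
@[simp] theorem trunc_succ_pair (n : ℕ) (a b : Comm V L) :
    trunc (n + 1) (pair a b) = pair (trunc n a) (trunc n b) := rfl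
@[simp] theorem trunc_succ_val (n : ℕ) (f : V) (v : Comm V L) :
    trunc (n + 1) (val f v) = val f (trunc n v) := rfl

@[simp] theorem simStep_bot (w : Comm V L) : SimStep R S bot w := Or.inl rfl

@[simp]
theorem simStep_close_iff {w : Comm V L} : SimStep R S close w ↔ w = close := by
  refine ⟨?_, fun hw => Or.inr (Or.inl ⟨rfl, hw⟩)⟩
  -- a clause for another constructor is refuted by the shapes of the two nodes
  rintro (h | ⟨_, hw⟩ | ⟨_, _, _, h, _⟩ | ⟨_, _, _, _, h, _⟩ | ⟨_, _, _, _, h, _⟩)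
    <;> first | exact hw | cases congrArg Sigma.fst (PFunctor.M.mk_inj h)

@[simp]
theorem simStep_label_iff {k : L} {v w : Comm V L} :
    SimStep R S (label k v) w ↔ ∃ v', w = label k v' ∧ S v v' := by
  refine ⟨?_, fun ⟨v', hw, hS⟩ => Or.inr <| Or.inr <| Or.inl ⟨k, v, v', rfl, hw, hS⟩⟩
  rintro (h | ⟨h, _⟩ | ⟨k', v₀, v', h, hw, hS⟩ | ⟨_, _, _, _, h, _⟩ | ⟨_, _, _, _, h, _⟩)
    <;> cases congrArg Sigma.fst (PFunctor.M.mk_inj h)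
  obtain ⟨-, rfl⟩ := label_inj.1 h
  exact ⟨v', hw, hS⟩

@[simp]
theorem simStep_pair_iff {a b w : Comm V L} :
    SimStep R S (pair a b) w ↔ ∃ a' b', w = pair a' b' ∧ S a a' ∧ S b b' := by
  refine ⟨?_, fun ⟨a', b', hw, ha, hb⟩ =>
    Or.inr <| Or.inr <| Or.inr <| Or.inl ⟨a, b, a', b', rfl, hw, ha, hb⟩⟩
  rintro (h | ⟨h, _⟩ | ⟨_, _, _, h, _⟩ | ⟨a₀, b₀, a', b', h, hw, ha, hb⟩ | ⟨_, _, _, _, h, _⟩)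
    <;> cases congrArg Sigma.fst (PFunctor.M.mk_inj h)
  obtain ⟨rfl, rfl⟩ := pair_inj.1 h
  exact ⟨a', b', hw, ha, hb⟩

@[simp]
theorem simStep_val_iff {f : V} {v w : Comm V L} :
    SimStep R S (val f v) w ↔ ∃ g v', w = val g v' ∧ R f g ∧ S v v' := by
  refine ⟨?_, fun ⟨g, v', hw, hR, hS⟩ =>
    Or.inr <| Or.inr <| Or.inr <| Or.inr ⟨f, g, v, v', rfl, hw, hR, hS⟩⟩
  rintro (h | ⟨h, _⟩ | ⟨_, _, _, h, _⟩ | ⟨_, _, _, _, h, _⟩ | ⟨f₀, g, v₀, v', h, hw, hR, hS⟩)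
    <;> cases congrArg Sigma.fst (PFunctor.M.mk_inj h)
  obtain ⟨-, rfl⟩ := val_inj.1 h
  exact ⟨g, v', hw, hR, hS⟩

theorem SimStep.mono {T : Comm V L → Comm V L → Prop} (hST : ∀ a b, S a b → T a b)
    {u w : Comm V L} (h : SimStep R S u w) : SimStep R T u w := by
  induction u using Comm.cases with
  | hbot => exact simStep_bot w
  | hclose => exact simStep_close_iff.2 (simStep_close_iff.1 h)
  | hlabel k v =>
    obtain ⟨v', hw, hS⟩ := simStep_label_iff.1 h
    exact simStep_label_iff.2 ⟨v', hw, hST _ _ hS⟩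
  | hpair a b =>
    obtain ⟨a', b', hw, ha, hb⟩ := simStep_pair_iff.1 h
    exact simStep_pair_iff.2 ⟨a', b', hw, hST _ _ ha, hST _ _ hb⟩
  | hval f v =>
    obtain ⟨g, v', hw, hR, hS⟩ := simStep_val_iff.1 h
    exact simStep_val_iff.2 ⟨g, v', hw, hR, hST _ _ hS⟩

theorem Sim.simStep {u w : Comm V L} : Sim R u w → SimStep R (Sim R) u w
  | ⟨S, hS, huw⟩ => (hS u w huw).mono fun _ _ hab => ⟨S, hS, hab⟩

theorem sim_iff_simStep {u w : Comm V L} : Sim R u w ↔ SimStep R (Sim R) u w :=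
  ⟨Sim.simStep, fun h => ⟨SimStep R (Sim R), fun _ _ hab => hab.mono fun _ _ => Sim.simStep, h⟩⟩

theorem simStep_trunc_succ_iff {T : Comm V L → Comm V L → Prop} (n : ℕ) {u w : Comm V L} :
    SimStep R T (trunc (n + 1) u) w ↔ SimStep R (fun a b => T (trunc n a) b) u w := by
  induction u using Comm.cases <;> simp

theorem simStep_forall_of_forall {ι : Type*} [Nonempty ι] {T : ι → Comm V L → Comm V L → Prop}
    {u w : Comm V L} (h : ∀ i, SimStep R (T i) u w) : SimStep R (fun a b => ∀ i, T i a b) u w := by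
  obtain ⟨i₀⟩ := ‹Nonempty ι›
  induction u using Comm.cases with
  | hbot => exact simStep_bot w
  | hclose => simpa using h i₀
  | hlabel k v =>
    obtain ⟨v', rfl, -⟩ := simStep_label_iff.1 (h i₀)
    simpa using h
  | hpair a b =>
    obtain ⟨a', b', rfl, -⟩ := simStep_pair_iff.1 (h i₀)
    simpa [forall_and] using h
  | hval f v =>
    obtain ⟨g, v', rfl, -⟩ := simStep_val_iff.1 (h i₀)
    simpa [forall_and] using h

theorem Sim.trunc {u w : Comm V L} (h : Sim R u w) (n : ℕ) : Sim R (trunc n u) w := by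
  induction n generalizing u w with
  | zero => exact sim_iff_simStep.2 (simStep_bot w)
  | succ n ih =>
    rw [sim_iff_simStep, simStep_trunc_succ_iff]
    exact (sim_iff_simStep.1 h).mono fun _ _ => ih

theorem sim_of_forall_trunc {u w : Comm V L} (h : ∀ n, Sim R (trunc n u) w) : Sim R u w :=
  ⟨fun a b => ∀ n, Sim R (trunc n a) b,
    fun _ _ hab => simStep_forall_of_forall fun n =>
      (simStep_trunc_succ_iff n).1 (sim_iff_simStep.1 (hab (n + 1))), h⟩

end Comm

/-- Simulation is determined by all finite truncations of the left-hand side. -/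
theorem stmt_13 {V L : Type} (R : V → V → Prop) (u w : Comm V L) :
    Comm.Sim R u w ↔ ∀ n : ℕ, Comm.Sim R (Comm.trunc n u) w :=
  ⟨Comm.Sim.trunc, Comm.sim_of_forall_trunc⟩
end

section
/- When the relation on values is equality, mutual simulation of communication trees implies equality: if u ⊑₌ w and w ⊑₌ u then u = w. -/
/-! Mutual simulation modulo equality is a bisimulation in the sense of `PFunctor.M.bisim`.
Away from `bot`, one simulation step modulo equality says that both trees have the same root
shape and related children; and a tree that simulates `bot` is `bot` itself, so the two
directions of mutual simulation always describe the same node. -/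

namespace Comm

variable {V L : Type}

theorem Sim.unfold {R : V → V → Prop} {u w : Comm V L} (h : Sim R u w) :
    SimStep R (Sim R) u w := by
  obtain ⟨S, hS, huw⟩ := h
  have hSim : ∀ {a b}, S a b → Sim R a b := fun hab => ⟨S, hS, hab⟩
  rcases hS u w huw with h | h | ⟨k, v, v', hu, hw, hv⟩ | ⟨a, b, a', b', hu, hw, ha, hb⟩ |
    ⟨f, g, v, v', hu, hw, hfg, hv⟩
  · exact .inl h
  · exact .inr <| .inl h
  · exact .inr <| .inr <| .inl ⟨k, v, v', hu, hw, hSim hv⟩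
  · exact .inr <| .inr <| .inr <| .inl ⟨a, b, a', b', hu, hw, hSim ha, hSim hb⟩
  · exact .inr <| .inr <| .inr <| .inr ⟨f, g, v, v', hu, hw, hfg, hSim hv⟩

theorem eq_bot_of_sim_bot {R : V → V → Prop} {u : Comm V L} (h : Sim R u bot) : u = bot := by
  rcases h.unfold with h | ⟨-, h⟩ | ⟨_, _, _, -, h, -⟩ | ⟨_, _, _, _, -, h, -⟩ |
    ⟨_, _, _, _, -, h, -⟩
  · exact h
  all_goals cases PFunctor.M.mk_inj h

theorem SimStep.eq_bot_or_dest {S : Comm V L → Comm V L → Prop} {u w : Comm V L}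
    (h : SimStep (· = ·) S u w) :
    u = bot ∨ ∃ a f g, PFunctor.M.dest u = ⟨a, f⟩ ∧ PFunctor.M.dest w = ⟨a, g⟩ ∧
      ∀ i, S (f i) (g i) := by
  rcases h with h | ⟨rfl, rfl⟩ | ⟨k, v, v', rfl, rfl, hv⟩ | ⟨a, b, a', b', rfl, rfl, ha, hb⟩ |
    ⟨f, _, v, v', rfl, rfl, rfl, hv⟩
  · exact .inl h
  · exact .inr ⟨_, _, _, rfl, rfl, fun i => i.elim⟩
  · exact .inr ⟨_, _, _, rfl, rfl, fun _ => hv⟩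
  · exact .inr ⟨_, _, _, rfl, rfl, fun | true => ha | false => hb⟩
  · exact .inr ⟨_, _, _, rfl, rfl, fun _ => hv⟩

end Comm

/-- When the relation on values is equality, mutual simulation implies
equality of communication trees. -/
theorem stmt_14 {V L : Type} (u w : Comm V L)
    (h1 : Comm.Sim (fun f g : V => f = g) u w)
    (h2 : Comm.Sim (fun f g : V => f = g) w u) :
    u = w := by
  refine PFunctor.M.bisim (fun x y => Comm.Sim (· = ·) x y ∧ Comm.Sim (· = ·) y x) ?_ u w ⟨h1, h2⟩
  rintro x y ⟨hxy, hyx⟩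
  rcases hxy.unfold.eq_bot_or_dest with rfl | ⟨a, f, g, hx, hy, hfg⟩
  · obtain rfl := Comm.eq_bot_of_sim_bot hyx
    exact ⟨_, _, _, rfl, rfl, fun i => i.elim⟩
  rcases hyx.unfold.eq_bot_or_dest with rfl | ⟨a', g', f', hy', hx', hgf⟩
  · obtain rfl := Comm.eq_bot_of_sim_bot hxy
    exact ⟨_, _, _, rfl, rfl, fun i => i.elim⟩
  cases hx.symm.trans hx'
  cases hy.symm.trans hy'
  exact ⟨a, f, g, hx, hy, fun i => ⟨hfg i, hgf i⟩⟩
end
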